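/- arXiv:1306.3305 — 2 statements merged into one kernel-verified Lean document; each statement's English description precedes it below -/
import Mathlib

section
/- Let $e_1,\ldots,e_{2k}$ be the edges of an even cycle in a finite simple graph $G$, and $a_{e_i} = \mathbf{1}_{v_i} + \mathbf{1}_{v_{i+1}} \in \mathbb{Z}^{V(G)}$ (indices mod $2k$). Then any real linear combination $x = \sum_{i=1}^{2k} r_i a_{e_i}$ with $r_i \in \mathbb{R}$ that lies in $\mathbb{Z}^{V(G)}$ actually lies in the subgroup $\mathbb{Z}\text{-span}\{a_{e_1},\ldots,a_{e_{2k}}\}$. In other words, $\mathbb{R}\text{-span}\{a_{e_i}\} \cap \mathbb{Z}^{V(G)} = \mathbb{Z}\text{-span}\{a_{e_i}\}$. -/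
/-!
Write `x = ∑ cᵢ • aᵢ`. Evaluating at `v j` shows `c j + c (j - 1) ∈ ℤ`, hence
`cᵢ ≡ (-1)^i c₀ (mod ℤ)` along the cycle. Because the cycle has even length, the alternating sum
`∑ (-1)^i • aᵢ` vanishes, and subtracting `c₀` times this relation leaves integer coefficients.
-/

theorem Fin.neg_one_pow_val_add_one {R : Type*} [Ring R] {n : ℕ} [NeZero n] (hn : Even n)
    (i : Fin n) : (-1 : R) ^ ((i + 1 : Fin n) : ℕ) = -(-1) ^ (i : ℕ) := by
  rw [neg_one_pow_eq_pow_mod_two, Fin.val_add, Fin.val_one', Nat.mod_mod_of_dvd _ hn.two_dvd,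
    Nat.add_mod, Nat.mod_mod_of_dvd _ hn.two_dvd, ← Nat.add_mod, ← neg_one_pow_eq_pow_mod_two,
    pow_succ, mul_neg_one]

theorem sub_neg_one_pow_mul_mem_of_add_succ_mem {R : Type*} [Ring R] {S : AddSubgroup R}
    {f : ℕ → R} (hf : ∀ m, f (m + 1) + f m ∈ S) (m : ℕ) : f m - (-1) ^ m * f 0 ∈ S := by
  induction m with
  | zero => simp
  | succ m ih =>
    have h := S.sub_mem (hf m) ih
    convert h using 1
    noncomm_ring

open Fin.NatCast in
theorem Fin.sub_neg_one_pow_mul_mem_of_add_one_mem {R : Type*} [Ring R] {S : AddSubgroup R}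
    {n : ℕ} [NeZero n] {f : Fin n → R} (hf : ∀ j, f (j + 1) + f j ∈ S) (i : Fin n) :
    f i - (-1) ^ (i : ℕ) * f 0 ∈ S := by
  simpa using sub_neg_one_pow_mul_mem_of_add_succ_mem (f := fun m : ℕ => f m)
    (fun m => by simpa using hf m) i

section CycleEdgeVector

variable {V : Type*} [DecidableEq V] {n : ℕ} [NeZero n]

def cycleEdgeVector (R : Type*) [Semiring R] (v : Fin n → V) (i : Fin n) : V → R :=
  Pi.single (v i) 1 + Pi.single (v (i + 1)) 1

theorem sum_smul_cycleEdgeVector_apply {R : Type*} [Semiring R] {v : Fin n → V} (hv : Function.Injective v)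
    (d : Fin n → R) (j : Fin n) :
    (∑ i, d i • cycleEdgeVector R v i) (v j) = d j + d (j - 1) := by
  simp [cycleEdgeVector, Finset.sum_apply, Pi.single_apply, hv.eq_iff, Finset.sum_add_distrib,
    ← sub_eq_iff_eq_add]

theorem sum_neg_one_pow_smul_cycleEdgeVector {R : Type*} [Ring R] (hn : Even n) (v : Fin n → V) :
    ∑ i : Fin n, (-1 : R) ^ (i : ℕ) • cycleEdgeVector R v i = 0 := by
  have hshift : ∑ i : Fin n, (-1 : R) ^ ((i + 1 : Fin n) : ℕ) • Pi.single (v (i + 1)) (1 : R)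
      = ∑ i : Fin n, (-1 : R) ^ (i : ℕ) • Pi.single (v i) 1 :=
    Equiv.sum_comp (Equiv.addRight 1) fun i : Fin n => (-1 : R) ^ (i : ℕ) • Pi.single (v i) (1 : R)
  simp only [Fin.neg_one_pow_val_add_one hn, neg_smul, Finset.sum_neg_distrib, neg_eq_iff_eq_neg]
    at hshift
  simp only [cycleEdgeVector, smul_add, Finset.sum_add_distrib, hshift, add_neg_cancel]

end CycleEdgeVector

/-- For the edge vectors `a_{e_1}, …, a_{e_{2k}}` of an even cycle of a finite
simple graph, `ℝ-span{a_{e_i}} ∩ ℤ^V = ℤ-span{a_{e_i}}`: every real linear combination of the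
`a_{e_i}` having all integer coordinates is an integer linear combination of the `a_{e_i}`. -/
theorem stmt2 {V : Type*} [DecidableEq V] (k : ℕ) (hk : 0 < k)
    (v : Fin (2 * k) → V) (hinj : Function.Injective v)
    (a : Fin (2 * k) → V → ℝ)
    (ha : ∀ i : Fin (2 * k), a i = fun x =>
      (if x = v i then (1 : ℝ) else 0) + (if x = v (i + ⟨1, by omega⟩) then 1 else 0)) :
    ∀ x : V → ℝ, x ∈ Submodule.span ℝ (Set.range a) → (∀ u : V, ∃ m : ℤ, x u = m) →
      ∃ z : Fin (2 * k) → ℤ, x = ∑ i : Fin (2 * k), (z i : ℝ) • a i := by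
  have : NeZero (2 * k) := ⟨by omega⟩
  have hone : (⟨1, by omega⟩ : Fin (2 * k)) = 1 := Fin.ext (Nat.mod_eq_of_lt (by omega)).symm
  obtain rfl : a = cycleEdgeVector ℝ v := by
    funext i
    simp only [ha i, hone, cycleEdgeVector]
    ext u
    simp [Pi.single_apply]
  rintro x hx hint
  obtain ⟨c, rfl⟩ := (Submodule.mem_span_range_iff_exists_fun ℝ).mp hx
  have hadd : ∀ j, c (j + 1) + c j ∈ (Int.castAddHom ℝ).range := by
    intro j
    obtain ⟨z, hz⟩ := hint (v (j + 1))
    rw [sum_smul_cycleEdgeVector_apply hinj, add_sub_cancel_right] at hz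
    exact ⟨z, by simpa using hz.symm⟩
  choose z hz using fun i : Fin (2 * k) => Fin.sub_neg_one_pow_mul_mem_of_add_one_mem hadd i
  simp only [Int.coe_castAddHom] at hz
  refine ⟨z, ?_⟩
  calc ∑ i, c i • cycleEdgeVector ℝ v i
      = ∑ i, ((z i : ℝ) + c 0 * (-1) ^ (i : ℕ)) • cycleEdgeVector ℝ v i := by
        refine Finset.sum_congr rfl fun i _ => congrArg (· • _) ?_
        rw [hz i]
        ring
    _ = ∑ i, (z i : ℝ) • cycleEdgeVector ℝ v i := by
        simp only [add_smul, mul_smul, Finset.sum_add_distrib, ← Finset.smul_sum,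
          sum_neg_one_pow_smul_cycleEdgeVector (even_two_mul k), smul_zero, add_zero]
end

section
/- Let $n \ge 3$ be odd and $G_r^n$ the graph family from the paper. Every path in $G_r^n$ joining a vertex of one block to a vertex of another block has length at most $(2r-1)(n-1)$ plus at most $n-1$ edges in each endpoint block; more precisely, a path between two vertex-disjoint cycles (blocks) of $G_r^n$ has length at most $(2r-1)(n-1)$. -/
/-- Vertices of the graph `G_r^n` of the paper: a vertex is addressed by a position
`q ∈ Fin n` on the root `n`-cycle together with a list of at most `r` further positions,
each in `{1, …, n-1}` (encoded as `Fin (n-1)`), recording in which vertex of which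
successively attached `n`-cycle it lies.  A vertex with address-tail of length `m < r` is
exactly a degree-two vertex of `G_m^n`, and the unique `n`-cycle attached to it at step
`m+1` has vertices `(q, l ++ [j])`, `j ∈ Fin (n-1)` (position `j+1` on that cycle),
together with the attachment vertex `(q, l)` itself (position `0`). -/
def GVert (n r : ℕ) := Fin n × { l : List (Fin (n - 1)) // l.length ≤ r }

/-- The basic (one-directional) edge relation of `G_r^n`: consecutive vertices on the root
cycle; the attachment vertex joined to the first (position `1`, i.e. `j = 0`) and last
(position `n-1`, i.e. `j = n-2`) vertex of the cycle attached to it; or consecutive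
vertices of an attached cycle. -/
def GRel (n r : ℕ) : GVert n r → GVert n r → Prop := fun a b =>
  (a.2.1 = [] ∧ b.2.1 = [] ∧ (b.1 : ℕ) = ((a.1 : ℕ) + 1) % n) ∨
  (a.1 = b.1 ∧ ∃ j : Fin (n - 1), b.2.1 = a.2.1 ++ [j] ∧ ((j : ℕ) = 0 ∨ (j : ℕ) = n - 2)) ∨
  (a.1 = b.1 ∧ ∃ (l : List (Fin (n - 1))) (j j' : Fin (n - 1)),
      a.2.1 = l ++ [j] ∧ b.2.1 = l ++ [j'] ∧ (j' : ℕ) = (j : ℕ) + 1)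

/-- The graph `G_r^n` of the paper: `G_0^n` is an `n`-cycle and `G_r^n` is obtained from
`G_{r-1}^n` by attaching an `n`-cycle (one-point union) at each degree-two vertex. -/
def Gc (n r : ℕ) : SimpleGraph (GVert n r) where
  Adj a b := a ≠ b ∧ (GRel n r a b ∨ GRel n r b a)
  symm := ⟨fun a b h => ⟨h.1.symm, h.2.symm⟩⟩
  loopless := ⟨fun _ h => h.1 rfl⟩

/-- The blocks of the graph `G_r^n` of the paper: every block is an `n`-cycle, namely
either the root cycle (encoded by `none`) or the cycle attached (at construction step
`length + 1 ≤ r`) at the degree-two vertex with address `(q, l)` (encoded by `some (q, l)`). -/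
def Blk (n r : ℕ) := Option (Fin n × { l : List (Fin (n - 1)) // l.length + 1 ≤ r })

/-- Depth of a block in the block tree of `G_r^n` (root cycle has depth `0`,
the cycle attached at step `s` has depth `s`). -/
def blkDepth {n r : ℕ} : Blk n r → ℕ
  | none => 0
  | some (_, l) => l.1.length + 1

/-- Longest common prefix of two lists. -/
def lcp {α : Type*} [DecidableEq α] : List α → List α → List α
  | a :: as, b :: bs => if a = b then a :: lcp as bs else []
  | _, _ => []

/-- Depth of the least common ancestor of two blocks in the block tree of `G_r^n`. -/
def blkLCADepth {n r : ℕ} : Blk n r → Blk n r → ℕ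
  | some (q, l), some (q', l') => if q = q' then (lcp l.1 l'.1).length + 1 else 0
  | _, _ => 0

/-- The block distance `d(B₁, B₂)`: the number of internal blocks (internal vertices
belonging to the block side of the bipartition) on the unique path joining `B₁` and `B₂`
in the block tree `B(G_r^n)`. -/
def blockDist {n r : ℕ} (b1 b2 : Blk n r) : ℕ :=
  blkDepth b1 + blkDepth b2 - 2 * blkLCADepth b1 b2 - 1

/-- The vertex set of a block of `G_r^n`: the root cycle consists of the vertices with
empty address-tail; the block attached at `(q, l)` consists of `(q, l)` together with the
vertices `(q, l ++ [j])`. -/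
def blockVerts {n r : ℕ} : Blk n r → Set (GVert n r)
  | none => {x | x.2.1 = []}
  | some (q, l) => {x | x.1 = q ∧ (x.2.1 = l.1 ∨ ∃ j : Fin (n - 1), x.2.1 = l.1 ++ [j])}

/-! Every edge of `G_r^n` lies in a block, an `n`-cycle, and a path uses at most `n - 1` edges of
any cycle. If a path uses an edge of the cycle attached at the vertex `c`, it visits a vertex
other than `c` of the branch hanging at `c`; as `c` is a cut vertex that the path passes at most
once, one of the endpoints lies in that branch. So every block used is an ancestor, in the block
tree, of a block containing an endpoint. Each endpoint has at most `r + 1` ancestor blocks, the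
root being shared, and `B₁`, `B₂` are among these `2r + 1` blocks without contributing edges: at
most `2r - 1` blocks are used, each with at most `n - 1` edges. -/

namespace SimpleGraph

variable {V : Type*} {G : SimpleGraph V}

section Separation

variable {S : Set V} {c : V}

theorem Walk.mem_support_of_mem_of_notMem (hS : ∀ x y, G.Adj x y → x ∈ S → y ∉ S → x = c)
    {u v : V} (w : G.Walk u v) (hu : u ∈ S) (hv : v ∉ S) : c ∈ w.support := by
  induction w with
  | nil => exact absurd hu hv
  | @cons u x v hadj w ih =>
    by_cases hx : x ∈ S
    · exact List.mem_cons_of_mem _ (ih hx hv)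
    · exact hS u x hadj hu hx ▸ (cons hadj w).start_mem_support

theorem Walk.IsPath.mem_or_mem_of_mem_support (hS : ∀ x y, G.Adj x y → x ∈ S → y ∉ S → x = c)
    {u v x : V} {p : G.Walk u v} (hp : p.IsPath) (hx : x ∈ p.support) (hxS : x ∈ S)
    (hxc : x ≠ c) : u ∈ S ∨ v ∈ S := by
  by_contra! h
  obtain ⟨q, q', -, -, rfl⟩ := hp.mem_support_iff_exists_append.mp hx
  have hq : c ∈ q.support := by
    simpa using q.reverse.mem_support_of_mem_of_notMem hS hxS h.1
  exact hp.ne_of_mem_support_of_append (Ne.symm hxc) hq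
    (q'.mem_support_of_mem_of_notMem hS hxS h.2) rfl

end Separation

variable [DecidableEq V]

theorem Walk.countP_edges_mem_sym2_le {u v : V} (p : G.Walk u v) (s : Finset V) :
    p.edges.countP (· ∈ s.sym2) ≤ p.support.countP (· ∈ s) - 1 := by
  induction p with
  | nil => simp
  | @cons u x v hadj p ih =>
    have hx : x ∈ s → 0 < p.support.countP (· ∈ s) := fun hx =>
      List.countP_pos_iff.mpr ⟨x, p.start_mem_support, by simpa using hx⟩
    simp only [Walk.edges_cons, Walk.support_cons, List.countP_cons, Finset.mk_mem_sym2_iff]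
    split_ifs with h1 h2 h2 <;> simp only [decide_eq_true_eq] at h1 h2
    · have := hx h1.2; omega
    · exact absurd h1.1 h2
    all_goals omega

theorem Walk.IsPath.card_edges_inter_sym2_le {u v : V} {p : G.Walk u v} (hp : p.IsPath)
    (s : Finset V) : (p.edges.toFinset ∩ s.sym2).card ≤ s.card - 1 := by
  have hedges : (p.edges.toFinset ∩ s.sym2).card = p.edges.countP (· ∈ s.sym2) := by
    rw [List.countP_eq_length_filter, ← List.toFinset_card_of_nodup (hp.edges_nodup.filter _)]
    congr 1
    ext e
    simp
  have hsupport : p.support.countP (· ∈ s) ≤ s.card := by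
    rw [List.countP_eq_length_filter, ← List.toFinset_card_of_nodup (hp.support_nodup.filter _)]
    exact Finset.card_le_card fun x hx => (by simpa using hx : x ∈ p.support ∧ x ∈ s).2
  have := p.countP_edges_mem_sym2_le s
  omega

end SimpleGraph

section Blocks

variable {n r : ℕ}

instance : DecidableEq (GVert n r) := inferInstanceAs (DecidableEq (Fin n × _))

instance : DecidableEq (Blk n r) := inferInstanceAs (DecidableEq (Option _))

def blockFinset : Blk n r → Finset (GVert n r)
  | none => Finset.univ.image (β := GVert n r) fun q => (q, ⟨[], Nat.zero_le r⟩)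
  | some (q, l) => insert (q, ⟨l.1, by have := l.2; omega⟩)
      (Finset.univ.image (β := GVert n r) fun j => (q, ⟨l.1 ++ [j], by simpa using l.2⟩))

theorem coe_blockFinset (B : Blk n r) : (blockFinset B : Set (GVert n r)) = blockVerts B := by
  ext x
  rcases B with _ | ⟨q, l⟩
  · refine Finset.mem_image.trans
      ⟨?_, fun hx => ⟨x.1, Finset.mem_univ _, Prod.ext rfl (Subtype.ext hx.symm)⟩⟩
    rintro ⟨q, -, rfl⟩
    rfl
  · refine Finset.mem_insert.trans ((or_congr_right Finset.mem_image).trans ⟨?_, ?_⟩)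
    · rintro (rfl | ⟨j, -, rfl⟩)
      · exact ⟨rfl, Or.inl rfl⟩
      · exact ⟨rfl, Or.inr ⟨j, rfl⟩⟩
    · rintro ⟨hq, hl | ⟨j, hj⟩⟩
      · exact Or.inl (Prod.ext hq (Subtype.ext hl))
      · exact Or.inr ⟨j, Finset.mem_univ _, Prod.ext hq.symm (Subtype.ext hj.symm)⟩

theorem card_blockFinset_le (B : Blk n r) : (blockFinset B).card ≤ n := by
  rcases B with _ | ⟨q, l⟩
  · exact Finset.card_image_le.trans (by simp)
  · have : 0 < n := q.pos
    calc _ ≤ (Finset.univ : Finset (Fin (n - 1))).card + 1 :=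
          (Finset.card_insert_le _ _).trans (Nat.add_le_add_right Finset.card_image_le 1)
      _ = n := by simp; omega

theorem exists_blockVerts_of_adj {x y : GVert n r} (h : (Gc n r).Adj x y) :
    ∃ B : Blk n r, x ∈ blockVerts B ∧ y ∈ blockVerts B := by
  suffices key : ∀ {x y : GVert n r}, GRel n r x y →
      ∃ B : Blk n r, x ∈ blockVerts B ∧ y ∈ blockVerts B by
    rcases h.2 with h | h
    · exact key h
    · obtain ⟨B, hy, hx⟩ := key h
      exact ⟨B, hx, hy⟩
  rintro ⟨q, l, hl⟩ ⟨q', l', hl'⟩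
    (⟨rfl, rfl, -⟩ | ⟨rfl, j, rfl, -⟩ | ⟨rfl, t, j, j', rfl, rfl, -⟩)
  · exact ⟨none, rfl, rfl⟩
  · exact ⟨some (q, ⟨l, by simpa using hl'⟩), ⟨rfl, Or.inl rfl⟩, ⟨rfl, Or.inr ⟨j, rfl⟩⟩⟩
  · exact ⟨some (q, ⟨t, by simpa using hl⟩), ⟨rfl, Or.inr ⟨j, rfl⟩⟩, ⟨rfl, Or.inr ⟨j', rfl⟩⟩⟩

theorem exists_blockVerts_of_mem_edgeSet {e : Sym2 (GVert n r)} (he : e ∈ (Gc n r).edgeSet) :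
    ∃ B : Blk n r, ∀ x ∈ e, x ∈ blockVerts B := by
  induction e using Sym2.ind with
  | h x y =>
    obtain ⟨B, hx, hy⟩ := exists_blockVerts_of_adj he
    exact ⟨B, fun z hz => by rcases Sym2.mem_iff.mp hz with rfl | rfl <;> assumption⟩

/-- The vertices at or below the address `(q, l)`: the attachment vertex `(q, l)` and everything
attached after it. -/
def branchVerts (q : Fin n) (l : List (Fin (n - 1))) : Set (GVert n r) :=
  {x | x.1 = q ∧ l <+: x.2.1}

theorem mem_branchVerts_of_adj {q : Fin n} {l : List (Fin (n - 1))} {x y : GVert n r}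
    (h : (Gc n r).Adj x y) (hx : x ∈ branchVerts q l) (hxl : x.2.1 ≠ l) : y ∈ branchVerts q l := by
  obtain ⟨hq, hl⟩ := hx
  have hl_root : x.2.1 ≠ [] := fun h0 => hxl (h0.trans (List.prefix_nil.mp (h0 ▸ hl)).symm)
  have hl_parent : ∀ t a, x.2.1 = t ++ [a] → l <+: t := fun t a ht =>
    (List.prefix_concat_iff.mp (ht ▸ hl)).resolve_left fun h => hxl (ht.trans h.symm)
  rcases h.2 with (⟨hx0, -, -⟩ | ⟨hxy, j, hy, -⟩ | ⟨hxy, t, j, j', hx', hy, -⟩) |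
    (⟨-, hx0, -⟩ | ⟨hxy, j, hx', -⟩ | ⟨hxy, t, j, j', hy, hx', -⟩)
  · exact absurd hx0 hl_root
  · exact ⟨hxy ▸ hq, hy ▸ hl.trans (List.prefix_append _ _)⟩
  · exact ⟨hxy ▸ hq, hy ▸ (hl_parent t j hx').trans (List.prefix_append _ _)⟩
  · exact absurd hx0 hl_root
  · exact ⟨hxy ▸ hq, hl_parent _ j hx'⟩
  · exact ⟨hxy ▸ hq, hy ▸ (hl_parent t j' hx').trans (List.prefix_append _ _)⟩

/-- The blocks whose branch contains `x`: the root cycle and the cycles attached at the prefixes of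
the address of `x` (for `k` beyond its length, `take k` just repeats the whole address). -/
def ancestorBlocks (x : GVert n r) : Finset (Blk n r) :=
  insert none <| Finset.univ.image (β := Blk n r) fun k : Fin r =>
    some (x.1, ⟨x.2.1.take k, Nat.succ_le_of_lt ((List.length_take_le _ _).trans_lt k.2)⟩)

theorem card_ancestorBlocks_le (x : GVert n r) : (ancestorBlocks x).card ≤ r + 1 :=
  (Finset.card_insert_le _ _).trans (Nat.add_le_add_right (Finset.card_image_le.trans (by simp)) 1)

theorem card_union_ancestorBlocks_le (x y : GVert n r) :
    (ancestorBlocks x ∪ ancestorBlocks y).card ≤ 2 * r + 1 := by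
  have hinter : 0 < (ancestorBlocks x ∩ ancestorBlocks y).card :=
    Finset.card_pos.mpr ⟨none, Finset.mem_inter.mpr
      ⟨Finset.mem_insert_self _ _, Finset.mem_insert_self _ _⟩⟩
  have := Finset.card_union_add_card_inter (ancestorBlocks x) (ancestorBlocks y)
  have := card_ancestorBlocks_le x
  have := card_ancestorBlocks_le y
  omega

theorem some_mem_ancestorBlocks {x : GVert n r} {q : Fin n}
    {l : {l : List (Fin (n - 1)) // l.length + 1 ≤ r}} (hx : x ∈ branchVerts q l.1) :
    some (q, l) ∈ ancestorBlocks x := by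
  obtain ⟨rfl, hl⟩ := hx
  refine Finset.mem_insert_of_mem (Finset.mem_image.mpr ⟨⟨l.1.length, l.2⟩, Finset.mem_univ _, ?_⟩)
  congr
  exact (List.prefix_iff_eq_take.mp hl).symm

theorem blockVerts_some_subset_branchVerts (q : Fin n)
    (l : {l : List (Fin (n - 1)) // l.length + 1 ≤ r}) :
    blockVerts (some (q, l)) ⊆ branchVerts q l.1 := by
  rintro x ⟨hq, hl | ⟨j, hj⟩⟩
  · exact ⟨hq, hl ▸ List.prefix_rfl⟩
  · exact ⟨hq, hj ▸ List.prefix_append _ _⟩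

theorem mem_ancestorBlocks_of_mem_blockVerts {x : GVert n r} {B : Blk n r}
    (hx : x ∈ blockVerts B) : B ∈ ancestorBlocks x := by
  rcases B with _ | ⟨q, l⟩
  · exact Finset.mem_insert_self _ _
  · exact some_mem_ancestorBlocks (blockVerts_some_subset_branchVerts q l hx)

theorem mem_union_ancestorBlocks_of_mem_edges {a b : GVert n r} {p : (Gc n r).Walk a b}
    (hp : p.IsPath) {e : Sym2 (GVert n r)} (he : e ∈ p.edges) {B : Blk n r}
    (heB : ∀ x ∈ e, x ∈ blockVerts B) : B ∈ ancestorBlocks a ∪ ancestorBlocks b := by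
  rcases B with _ | ⟨q, l⟩
  · exact Finset.mem_union_left _ (Finset.mem_insert_self _ _)
  -- The attachment vertex `c` of `B` separates its branch from the rest of the graph, and the
  -- path cannot pass through `c` twice.
  set c : GVert n r := (q, ⟨l.1, by have := l.2; omega⟩)
  have hsep : ∀ x y, (Gc n r).Adj x y → x ∈ branchVerts q l.1 → y ∉ branchVerts q l.1 → x = c :=
    fun x y h hx hy => by_contra fun hxc =>
      hy (mem_branchVerts_of_adj h hx fun hl => hxc (Prod.ext hx.1 (Subtype.ext hl)))
  obtain ⟨v, hv, hvB, hvc⟩ : ∃ v ∈ p.support, v ∈ blockVerts (some (q, l)) ∧ v ≠ c := by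
    induction e using Sym2.ind with
    | h x y =>
      by_cases hxc : x = c
      · refine ⟨y, p.snd_mem_support_of_mem_edges he, heB y (Sym2.mem_mk_right x y), ?_⟩
        rintro rfl
        exact (p.adj_of_mem_edges he).ne hxc
      · exact ⟨x, p.fst_mem_support_of_mem_edges he, heB x (Sym2.mem_mk_left x y), hxc⟩
  rcases hp.mem_or_mem_of_mem_support hsep hv (blockVerts_some_subset_branchVerts q l hvB) hvc
    with h | h
  · exact Finset.mem_union_left _ (some_mem_ancestorBlocks h)
  · exact Finset.mem_union_right _ (some_mem_ancestorBlocks h)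

theorem length_le_card_mul_of_edges_in_blocks {a b : GVert n r} {p : (Gc n r).Walk a b}
    (hp : p.IsPath) (C : Finset (Blk n r))
    (hC : ∀ e ∈ p.edges, ∃ B ∈ C, ∀ x ∈ e, x ∈ blockVerts B) : p.length ≤ C.card * (n - 1) := by
  have hcover : p.edges.toFinset ⊆ C.biUnion fun B => p.edges.toFinset ∩ (blockFinset B).sym2 := by
    intro e he
    obtain ⟨B, hB, heB⟩ := hC e (List.mem_toFinset.mp he)
    refine Finset.mem_biUnion.mpr ⟨B, hB, Finset.mem_inter.mpr ⟨he, ?_⟩⟩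
    refine Finset.mem_sym2_iff.mpr fun x hx => ?_
    rw [← Finset.mem_coe, coe_blockFinset]
    exact heB x hx
  calc p.length = p.edges.toFinset.card := by
        rw [List.toFinset_card_of_nodup hp.edges_nodup, SimpleGraph.Walk.length_edges]
    _ ≤ ∑ B ∈ C, (p.edges.toFinset ∩ (blockFinset B).sym2).card :=
        (Finset.card_le_card hcover).trans Finset.card_biUnion_le
    _ ≤ C.card * (n - 1) := by
        refine (Finset.sum_le_card_nsmul _ _ _ fun B _ => ?_).trans_eq (smul_eq_mul _ _)
        exact (hp.card_edges_inter_sym2_le _).trans (Nat.sub_le_sub_right (card_blockFinset_le B) 1)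

end Blocks

theorem stmt11_general (n r : ℕ)
    (B1 B2 : Blk n r) (hB : B1 ≠ B2) {a b : GVert n r}
    (ha : a ∈ blockVerts B1) (hb : b ∈ blockVerts B2)
    (p : (Gc n r).Walk a b) (hp : p.IsPath)
    (hedges : ∀ e ∈ p.edges,
      (¬ ∀ x ∈ e, x ∈ blockVerts B1) ∧ (¬ ∀ x ∈ e, x ∈ blockVerts B2)) :
    p.length ≤ (2 * r - 1) * (n - 1) := by
  set C := (ancestorBlocks a ∪ ancestorBlocks b) \ {B1, B2}
  have hC : C.card ≤ 2 * r - 1 := by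
    have hsub : {B1, B2} ⊆ ancestorBlocks a ∪ ancestorBlocks b :=
      Finset.insert_subset (Finset.mem_union_left _ (mem_ancestorBlocks_of_mem_blockVerts ha))
        (Finset.singleton_subset_iff.mpr
          (Finset.mem_union_right _ (mem_ancestorBlocks_of_mem_blockVerts hb)))
    have := card_union_ancestorBlocks_le a b
    rw [Finset.card_sdiff_of_subset hsub, Finset.card_pair hB]
    omega
  refine (length_le_card_mul_of_edges_in_blocks hp C fun e he => ?_).trans
    (Nat.mul_le_mul_right _ hC)
  obtain ⟨B, heB⟩ := exists_blockVerts_of_mem_edgeSet (p.edges_subset_edgeSet he)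
  refine ⟨B, Finset.mem_sdiff.mpr ⟨mem_union_ancestorBlocks_of_mem_edges hp he heB, ?_⟩, heB⟩
  simp only [Finset.mem_insert, Finset.mem_singleton]
  rintro (rfl | rfl)
  exacts [(hedges e he).1 heB, (hedges e he).2 heB]

/-- In `G_r^n` (odd `n ≥ 3`, `r ≥ 1`), any path joining a vertex of a block
`B₁` to a vertex of a distinct block `B₂` and using no edge of `B₁` or `B₂` has length at
most `(2r-1)(n-1)`: it passes through at most `2r-1` internal blocks (cycles of length `n`),
using at most `n-1` edges of each of them. -/
theorem stmt11 (n r : ℕ) (hn : 3 ≤ n) (hodd : Odd n) (hr : 1 ≤ r)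
    (B1 B2 : Blk n r) (hB : B1 ≠ B2) {a b : GVert n r}
    (ha : a ∈ blockVerts B1) (hb : b ∈ blockVerts B2)
    (p : (Gc n r).Walk a b) (hp : p.IsPath)
    (hedges : ∀ e ∈ p.edges,
      (¬ ∀ x ∈ e, x ∈ blockVerts B1) ∧ (¬ ∀ x ∈ e, x ∈ blockVerts B2)) :
    p.length ≤ (2 * r - 1) * (n - 1) :=
  stmt11_general n r B1 B2 hB ha hb p hp hedges
end
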